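/- Let k be an algebraically closed complete non-Archimedean valued field and f = Σ_{n≥0} aₙ zⁿ a power series with a₀ ≠ 0 and |aₙ| rⁿ → 0. Then f has a zero z ∈ k with |z| ≤ r if and only if |a₀| ≤ sup_{n≥1} |aₙ| rⁿ. -/

import Mathlib

/-!
Substituting `z = c t` reduces the statement to the closed unit disc. There, let `μ` be the
largest `‖aₙ‖` and `N` the largest index attaining it; the hypothesis says precisely that
`N ≥ 1`. By the ultrametric inequality these data multiply and add along products of
polynomials, so for `l ∏ (X - w)` the index is the number of roots in the closed unit disc and
`μ = ‖l‖ ∏ max ‖w‖ 1`. Hence every truncation `Pₘ` of the series with `m > N` has exactly `N`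
roots in the disc, and for `‖z‖ ≤ 1` one of them satisfies `‖z - w‖ ^ N μ ≤ ‖Pₘ(z)‖`. Starting
from a root of `P_{N+1}` and moving each time to such a root of the next truncation, the steps
satisfy `‖z_{j+1} - z_j‖ ^ N μ ≤ ‖a_{N+1+j}‖ → 0`, so the roots form a Cauchy sequence; its limit
is a zero of the series, which is Lipschitz on the disc and small at the `z_j`. The converse is
the ultrametric inequality applied to `a₀ = -∑_{n ≥ 1} aₙ zⁿ`.
-/

open Filter Topology Polynomial

/-- The central index `N` and maximal term `μ` of Wiman–Valiron theory, at radius one. -/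
structure IsCentralIndex {E : Type*} [Norm E] (a : ℕ → E) (N : ℕ) (μ : ℝ) : Prop where
  norm_le : ∀ n, ‖a n‖ ≤ μ
  norm_eq : ‖a N‖ = μ
  norm_lt : ∀ n, N < n → ‖a n‖ < μ

namespace IsCentralIndex

variable {E : Type*} {a : ℕ → E} {N M : ℕ} {μ ν : ℝ}

section Norm

variable [Norm E]

theorem unique (h : IsCentralIndex a N μ) (h' : IsCentralIndex a M ν) : N = M ∧ μ = ν := by
  have hμν : μ = ν := le_antisymm (h.norm_eq ▸ h'.norm_le N) (h'.norm_eq ▸ h.norm_le M)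
  refine ⟨?_, hμν⟩
  by_contra hNM
  rcases Nat.lt_or_gt_of_ne hNM with hlt | hlt
  · exact (h.norm_lt M hlt).ne (h'.norm_eq.trans hμν.symm)
  · exact (h'.norm_lt N hlt).ne (h.norm_eq.trans hμν)

theorem iSup_eq (h : IsCentralIndex a N μ) : ⨆ n, ‖a n‖ = μ :=
  le_antisymm (ciSup_le h.norm_le)
    (h.norm_eq ▸ le_ciSup ⟨μ, Set.forall_mem_range.2 h.norm_le⟩ N)

end Norm

theorem pos [SeminormedAddGroup E] (h : IsCentralIndex a N μ) : 0 < μ :=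
  (norm_nonneg _).trans_lt (h.norm_lt (N + 1) N.lt_succ_self)

section NormedAddGroup

variable [NormedAddGroup E]

theorem exists_of_tendsto (ha : Tendsto (fun n => ‖a n‖) atTop (𝓝 0)) {n₀ : ℕ}
    (hn₀ : a n₀ ≠ 0) : ∃ N μ, IsCentralIndex a N μ := by
  obtain ⟨M, hM⟩ := eventually_atTop.1 (ha.eventually_lt_const (norm_pos_iff.2 hn₀))
  have hn₀M : n₀ < M := not_le.1 fun h => (hM n₀ h).false
  have hne : (Finset.range M).Nonempty := ⟨n₀, Finset.mem_range.2 hn₀M⟩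
  set μ := (Finset.range M).sup' hne fun n => ‖a n‖
  have hle : ∀ n, ‖a n‖ ≤ μ := fun n => by
    rcases lt_or_ge n M with hn | hn
    · exact Finset.le_sup' (fun n => ‖a n‖) (Finset.mem_range.2 hn)
    · exact (hM n hn).le.trans (Finset.le_sup' (fun n => ‖a n‖) (Finset.mem_range.2 hn₀M))
  obtain ⟨N₀, hN₀, hN₀μ⟩ := Finset.exists_mem_eq_sup' hne fun n => ‖a n‖
  refine ⟨Nat.findGreatest (fun n => ‖a n‖ = μ) M, μ, hle,
    Nat.findGreatest_spec (P := fun n => ‖a n‖ = μ) (Finset.mem_range.1 hN₀).le hN₀μ.symm,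
    fun n hn => ?_⟩
  rcases le_or_gt n M with hnM | hnM
  · exact (hle n).lt_of_ne (Nat.findGreatest_is_greatest hn hnM)
  · exact (hM n hnM.le).trans_le (hle n₀)

theorem pos_of_norm_le_iSup (h : IsCentralIndex a N μ)
    (ha : Tendsto (fun n => ‖a n‖) atTop (𝓝 0)) (h0 : ‖a 0‖ ≤ ⨆ n, ‖a (n + 1)‖) :
    0 < N := by
  refine Nat.pos_of_ne_zero fun hN => ?_
  subst hN
  by_cases htail : ∀ n, a (n + 1) = 0
  · simp only [htail, norm_zero, ciSup_const] at h0
    exact (h.norm_eq ▸ h.pos).not_ge h0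
  · obtain ⟨n₀, hn₀⟩ := not_forall.1 htail
    obtain ⟨M, ν, hM⟩ := exists_of_tendsto (ha.comp (tendsto_add_atTop_nat 1)) hn₀
    rw [hM.iSup_eq, ← hM.norm_eq] at h0
    exact (h.norm_eq ▸ h.norm_lt (M + 1) M.succ_pos).not_ge h0

end NormedAddGroup

end IsCentralIndex

theorem exists_seq_forall_mem_and_rel {α : Type*} {S : ℕ → Set α}
    {R : ℕ → α → α → Prop} (h0 : (S 0).Nonempty) (h : ∀ j, ∀ x ∈ S j, ∃ y ∈ S (j + 1), R j x y) :
    ∃ z : ℕ → α, ∀ j, z j ∈ S j ∧ R j (z j) (z (j + 1)) := by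
  choose! next hnext_mem hnext_rel using h
  obtain ⟨x₀, hx₀⟩ := h0
  let z : ℕ → α := fun j => Nat.rec x₀ next j
  have hz (j : ℕ) : z j ∈ S j := by
    induction j with
    | zero => exact hx₀
    | succ j ih => exact hnext_mem j _ ih
  exact ⟨z, fun j => ⟨hz j, hnext_rel j _ (hz j)⟩⟩

theorem IsUltrametricDist.norm_sub_eq_right_of_norm_lt {S : Type*} [SeminormedAddGroup S]
    [IsUltrametricDist S] {x y : S} (h : ‖x‖ < ‖y‖) : ‖x - y‖ = ‖y‖ := by
  rw [sub_eq_add_neg, norm_add_eq_max_of_norm_ne_norm (by rw [norm_neg]; exact h.ne), norm_neg,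
    max_eq_right h.le]

section NormedField

variable {k : Type*} [NormedField k] {a : ℕ → k}

theorem isCentralIndex_C {l : k} (hl : l ≠ 0) : IsCentralIndex (C l).coeff 0 ‖l‖ := by
  refine ⟨fun n => ?_, by simp, fun n hn => ?_⟩
  · rw [coeff_C]; split_ifs <;> simp
  · rw [coeff_C, if_neg hn.ne', norm_zero]; exact norm_pos_iff.2 hl

theorem isCentralIndex_X_sub_C (w : k) :
    IsCentralIndex (X - C w).coeff (if ‖w‖ ≤ 1 then 1 else 0) (max ‖w‖ 1) := by
  have hcoeff (n : ℕ) :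
      ‖(X - C w).coeff n‖ = if n = 0 then ‖w‖ else if n = 1 then 1 else 0 := by
    rcases n with _ | _ | n <;> simp [coeff_X, coeff_C]
  have hle (n : ℕ) : ‖(X - C w).coeff n‖ ≤ max ‖w‖ 1 := by
    rw [hcoeff]; split_ifs <;> simp
  rcases le_or_gt ‖w‖ 1 with hw | hw
  · rw [if_pos hw]
    refine ⟨hle, by rw [hcoeff, max_eq_right hw]; simp, fun n hn => ?_⟩
    rw [hcoeff, if_neg (by omega), if_neg (by omega)]
    exact lt_max_of_lt_right one_pos
  · rw [if_neg hw.not_ge]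
    refine ⟨hle, by rw [hcoeff, if_pos rfl, max_eq_left hw.le], fun n hn => ?_⟩
    rw [hcoeff, if_neg hn.ne', max_eq_left hw.le]
    split_ifs
    exacts [hw, one_pos.trans hw]

theorem IsCentralIndex.trunc {N m : ℕ} {μ : ℝ} (h : IsCentralIndex a N μ) (hm : N < m) :
    IsCentralIndex (PowerSeries.trunc m (PowerSeries.mk a)).coeff N μ := by
  have hcoeff (n : ℕ) :
      (PowerSeries.trunc m (PowerSeries.mk a)).coeff n = if n < m then a n else 0 := by
    simp [PowerSeries.coeff_trunc]
  refine ⟨fun n => ?_, by rw [hcoeff, if_pos hm, h.norm_eq], fun n hn => ?_⟩ <;> rw [hcoeff] <;>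
    split_ifs
  exacts [h.norm_le n, norm_zero.trans_le h.pos.le, h.norm_lt n hn, norm_zero.trans_lt h.pos]

theorem eval_trunc_mk (m : ℕ) (z : k) :
    (PowerSeries.trunc m (PowerSeries.mk a)).eval z = ∑ n ∈ Finset.range m, a n * z ^ n := by
  simp [eval, PowerSeries.eval₂_trunc_eq_sum_range]

theorem norm_mul_pow_le_of_norm_le_one (c : k) {z : k} (hz : ‖z‖ ≤ 1) (n : ℕ) :
    ‖c * z ^ n‖ ≤ ‖c‖ := by
  rw [norm_mul, norm_pow]
  exact mul_le_of_le_one_right (norm_nonneg c) (pow_le_one₀ (norm_nonneg z) hz)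

variable [IsUltrametricDist k]

namespace IsCentralIndex

variable {p q : k[X]} {d e : ℕ} {G H : ℝ}

open Finset.HasAntidiagonal in
theorem mul (hp : IsCentralIndex p.coeff d G) (hq : IsCentralIndex q.coeff e H) :
    IsCentralIndex (p * q).coeff (d + e) (G * H) := by
  have term_le (i j : ℕ) : ‖p.coeff i * q.coeff j‖ ≤ G * H := by
    rw [norm_mul]
    exact mul_le_mul (hp.norm_le i) (hq.norm_le j) (norm_nonneg _) hp.pos.le
  have term_lt (i j : ℕ) (hij : d < i ∨ e < j) : ‖p.coeff i * q.coeff j‖ < G * H := by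
    rw [norm_mul]
    rcases hij with hi | hj
    · exact mul_lt_mul_of_lt_of_le_of_nonneg_of_pos (hp.norm_lt i hi) (hq.norm_le j)
        (norm_nonneg _) hq.pos
    · exact mul_lt_mul_of_le_of_lt_of_nonneg_of_pos (hp.norm_le i) (hq.norm_lt j hj)
        (norm_nonneg _) hp.pos
  refine ⟨fun n => ?_, ?_, fun n hn => ?_⟩
  · rw [coeff_mul]
    exact IsUltrametricDist.norm_sum_le_of_forall_le_of_nonneg (mul_pos hp.pos hq.pos).le
      fun x _ => term_le x.1 x.2
  · have hde : (d, e) ∈ antidiagonal (d + e) := mem_antidiagonal.2 rfl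
    have hde_norm : ‖p.coeff d * q.coeff e‖ = G * H := by rw [norm_mul, hp.norm_eq, hq.norm_eq]
    rw [coeff_mul]
    refine (IsNonarchimedean.apply_sum_eq_of_lt IsUltrametricDist.isNonarchimedean_norm
      (fun x => (norm_neg x).symm) hde fun ⟨i, j⟩ hij hne => ?_).trans hde_norm
    rw [mem_antidiagonal] at hij
    refine (term_lt i j ?_).trans_eq hde_norm.symm
    by_contra! h
    exact hne (Prod.ext (by omega) (by omega))
  · rw [coeff_mul]
    obtain ⟨⟨i, j⟩, hij, hle⟩ := IsUltrametricDist.exists_norm_finsetSum_le_of_nonempty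
      (t := antidiagonal n) ⟨(n, 0), mem_antidiagonal.2 (add_zero n)⟩
      fun x => p.coeff x.1 * q.coeff x.2
    rw [mem_antidiagonal] at hij
    exact hle.trans_lt (term_lt i j (by omega))

end IsCentralIndex

theorem isCentralIndex_C_mul_prod_X_sub_C {l : k} (hl : l ≠ 0) (s : Multiset k) :
    IsCentralIndex (C l * (s.map fun w => X - C w).prod).coeff
      (s.filter fun w => ‖w‖ ≤ 1).card (‖l‖ * (s.map fun w => max ‖w‖ 1).prod) := by
  induction s using Multiset.induction_on with
  | empty => simpa using isCentralIndex_C hl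
  | cons w s ih =>
    convert ih.mul (isCentralIndex_X_sub_C w) using 1
    · simp only [Multiset.map_cons, Multiset.prod_cons]; congr 1; ring
    · rw [Multiset.filter_cons, Multiset.card_add, add_comm]; split_ifs <;> rfl
    · simp only [Multiset.map_cons, Multiset.prod_cons]; ring

/-- Roots outside the closed unit disc contribute `‖z - w‖ = ‖w‖`, those inside at least
`ρ`. -/
theorem pow_card_filter_mul_prod_le_prod {z : k} (hz : ‖z‖ ≤ 1) {ρ : ℝ} (hρ : 0 ≤ ρ)
    {s : Multiset k} (hs : ∀ w ∈ s, ‖w‖ ≤ 1 → ρ ≤ ‖z - w‖) :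
    ρ ^ (s.filter fun w => ‖w‖ ≤ 1).card * (s.map fun w => max ‖w‖ 1).prod ≤
      (s.map fun w => ‖z - w‖).prod := by
  induction s using Multiset.induction_on with
  | empty => simp
  | cons w s ih =>
    have ih' := ih fun w hw => hs w (Multiset.mem_cons_of_mem hw)
    have hprod_nonneg : 0 ≤ (s.map fun w => max ‖w‖ 1).prod :=
      Multiset.prod_nonneg fun x hx => by
        obtain ⟨y, -, rfl⟩ := Multiset.mem_map.1 hx; positivity
    simp only [Multiset.filter_cons, Multiset.card_add, Multiset.map_cons, Multiset.prod_cons]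
    split_ifs with hw
    · rw [Multiset.card_singleton, max_eq_right hw, pow_add, pow_one, one_mul, mul_assoc]
      exact mul_le_mul (hs w (Multiset.mem_cons_self w s) hw) ih'
        (mul_nonneg (pow_nonneg hρ _) hprod_nonneg) (norm_nonneg _)
    · rw [not_le] at hw
      rw [Multiset.card_zero, zero_add, max_eq_left hw.le,
        IsUltrametricDist.norm_sub_eq_right_of_norm_lt (hz.trans_lt hw), mul_left_comm]
      exact mul_le_mul_of_nonneg_left ih' (norm_nonneg w)

theorem Polynomial.Splits.exists_isRoot_norm_sub_pow_mul_le {p : k[X]} (hsplit : p.Splits)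
    {N : ℕ} {μ : ℝ} (hp : IsCentralIndex p.coeff N μ) (hN : 0 < N) {z : k}
    (hz : ‖z‖ ≤ 1) :
    ∃ w, p.IsRoot w ∧ ‖w‖ ≤ 1 ∧ ‖z - w‖ ^ N * μ ≤ ‖p.eval z‖ := by
  have hp0 : p ≠ 0 := fun h => by simpa [h] using hp.pos.trans_eq hp.norm_eq.symm
  -- comparing with the factorization, `N` counts the roots in the closed unit disc
  have hroots := isCentralIndex_C_mul_prod_X_sub_C (leadingCoeff_ne_zero.2 hp0) p.roots
  rw [← hsplit.eq_prod_roots] at hroots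
  obtain ⟨rfl, rfl⟩ := hp.unique hroots
  obtain ⟨w, hw, hmin⟩ := Multiset.exists_min_image (fun w => ‖z - w‖)
    (Multiset.card_pos.1 hN)
  rw [Multiset.mem_filter] at hw
  refine ⟨w, isRoot_of_mem_roots hw.1, hw.2, ?_⟩
  have hnorm : ‖(p.roots.map (z - ·)).prod‖ = (p.roots.map fun w => ‖z - w‖).prod := by
    simpa [Multiset.map_map] using
      map_multiset_prod (normHom : k →*₀ ℝ) (p.roots.map (z - ·))
  rw [hsplit.eval_eq_prod_roots, norm_mul, hnorm, mul_left_comm]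
  exact mul_le_mul_of_nonneg_left (pow_card_filter_mul_prod_le_prod hz (norm_nonneg (z - w))
    fun x hx hx1 => hmin x (Multiset.mem_filter.2 ⟨hx, hx1⟩)) (norm_nonneg _)

theorem norm_pow_sub_pow_le {x y : k} (hx : ‖x‖ ≤ 1) (hy : ‖y‖ ≤ 1) (n : ℕ) :
    ‖x ^ n - y ^ n‖ ≤ ‖x - y‖ := by
  rw [← geom_sum₂_mul, norm_mul]
  refine mul_le_of_le_one_left (norm_nonneg _)
    (IsUltrametricDist.norm_sum_le_of_forall_le_of_nonneg zero_le_one fun i _ => ?_)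
  rw [norm_mul, norm_pow, norm_pow]
  exact mul_le_one₀ (pow_le_one₀ (norm_nonneg x) hx) (by positivity)
    (pow_le_one₀ (norm_nonneg y) hy)

theorem summable_mul_pow [CompleteSpace k] (ha : Tendsto (fun n => ‖a n‖) atTop (𝓝 0))
    {z : k} (hz : ‖z‖ ≤ 1) : Summable fun n => a n * z ^ n := by
  refine NonarchimedeanAddGroup.summable_of_tendsto_cofinite_zero ?_
  rw [Nat.cofinite_eq_atTop]
  exact squeeze_zero_norm (fun n => norm_mul_pow_le_of_norm_le_one (a n) hz n) ha

theorem norm_tsum_sub_eval_trunc_le {z : k} (hz : ‖z‖ ≤ 1)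
    (hs : Summable fun n => a n * z ^ n) {m : ℕ} {ε : ℝ} (hε : 0 ≤ ε) (h : ∀ n, m ≤ n → ‖a n‖ ≤ ε) :
    ‖∑' n, a n * z ^ n - (PowerSeries.trunc m (PowerSeries.mk a)).eval z‖ ≤ ε := by
  rw [eval_trunc_mk, ← hs.sum_add_tsum_nat_add m, add_sub_cancel_left]
  exact IsUltrametricDist.norm_tsum_le_of_forall_le_of_nonneg hε fun n =>
    (norm_mul_pow_le_of_norm_le_one _ hz _).trans (h _ (Nat.le_add_left m n))

theorem norm_tsum_sub_tsum_le {x y : k} (hx : ‖x‖ ≤ 1) (hy : ‖y‖ ≤ 1)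
    (hsx : Summable fun n => a n * x ^ n) (hsy : Summable fun n => a n * y ^ n) {C : ℝ}
    (hC : ∀ n, ‖a n‖ ≤ C) :
    ‖∑' n, a n * x ^ n - ∑' n, a n * y ^ n‖ ≤ C * ‖x - y‖ := by
  have hC0 : 0 ≤ C := (norm_nonneg _).trans (hC 0)
  rw [← hsx.tsum_sub hsy]
  refine IsUltrametricDist.norm_tsum_le_of_forall_le_of_nonneg (by positivity) fun n => ?_
  rw [← mul_sub, norm_mul]
  exact mul_le_mul (hC n) (norm_pow_sub_pow_le hx hy n) (norm_nonneg _) hC0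

theorem tsum_eq_zero_of_tendsto_of_eval_trunc_eq_zero [CompleteSpace k]
    (ha : Tendsto (fun n => ‖a n‖) atTop (𝓝 0)) {z : ℕ → k} {m : ℕ → ℕ} {w : k}
    (hz : ∀ j, ‖z j‖ ≤ 1)
    (hroot : ∀ j, (PowerSeries.trunc (m j) (PowerSeries.mk a)).eval (z j) = 0)
    (hm : Tendsto m atTop atTop) (hw : ‖w‖ ≤ 1) (hlim : Tendsto z atTop (𝓝 w)) :
    ∑' n, a n * w ^ n = 0 := by
  obtain ⟨C, hC⟩ := ha.bddAbove_range
  have hcont : Tendsto (fun j => ∑' n, a n * z j ^ n) atTop (𝓝 (∑' n, a n * w ^ n)) := by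
    rw [tendsto_iff_norm_sub_tendsto_zero]
    refine squeeze_zero (fun _ => norm_nonneg _) (fun j => norm_tsum_sub_tsum_le (hz j) hw
      (summable_mul_pow ha (hz j)) (summable_mul_pow ha hw) fun n => hC ⟨n, rfl⟩) ?_
    simpa using (tendsto_iff_norm_sub_tendsto_zero.1 hlim).const_mul C
  have hzero : Tendsto (fun j => ∑' n, a n * z j ^ n) atTop (𝓝 0) := by
    refine NormedAddGroup.tendsto_nhds_zero.2 fun ε hε => ?_
    obtain ⟨M, hM⟩ := eventually_atTop.1 (ha.eventually_lt_const (half_pos hε))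
    filter_upwards [tendsto_atTop.1 hm M] with j hj
    have := norm_tsum_sub_eval_trunc_le (hz j) (summable_mul_pow ha (hz j)) (half_pos hε).le
      fun n hn => (hM n (hj.trans hn)).le
    rw [hroot j, sub_zero] at this
    exact this.trans_lt (half_lt_self hε)
  exact tendsto_nhds_unique hcont hzero

theorem cauchySeq_of_norm_sub_pow_mul_le {z : ℕ → k} {N : ℕ} (hN : N ≠ 0) {μ : ℝ}
    (hμ : 0 < μ) {b : ℕ → ℝ} (hb : Tendsto b atTop (𝓝 0))
    (h : ∀ j, ‖z (j + 1) - z j‖ ^ N * μ ≤ b j) :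
    CauchySeq z := by
  refine NonarchimedeanAddGroup.cauchySeq_of_tendsto_sub_nhds_zero
    (tendsto_zero_iff_norm_tendsto_zero.2 (squeeze_zero (fun _ => norm_nonneg _)
      (g := fun j => (b j / μ) ^ (N⁻¹ : ℝ)) (fun j => ?_) ?_))
  · rw [← Real.pow_rpow_inv_natCast (norm_nonneg (z (j + 1) - z j)) hN]
    exact Real.rpow_le_rpow (by positivity) ((le_div_iff₀ hμ).2 (h j)) (by positivity)
  · simpa [Real.zero_rpow (inv_ne_zero (Nat.cast_ne_zero.2 hN))] using
      (hb.div_const μ).rpow_const (p := (N⁻¹ : ℝ)) (Or.inr (by positivity))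

theorem exists_seq_isRoot_trunc [IsAlgClosed k] {N : ℕ} {μ : ℝ} (h : IsCentralIndex a N μ)
    (hN : 0 < N) :
    ∃ z : ℕ → k, ∀ j,
      (‖z j‖ ≤ 1 ∧ (PowerSeries.trunc (N + 1 + j) (PowerSeries.mk a)).IsRoot (z j)) ∧
      ‖z (j + 1) - z j‖ ^ N * μ ≤ ‖a (N + 1 + j)‖ := by
  refine exists_seq_forall_mem_and_rel
    (S := fun j => {w | ‖w‖ ≤ 1 ∧ (PowerSeries.trunc (N + 1 + j) (PowerSeries.mk a)).IsRoot w})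
    (R := fun j x y => ‖y - x‖ ^ N * μ ≤ ‖a (N + 1 + j)‖) ?_
    fun j x ⟨hx, hroot⟩ => ?_
  · obtain ⟨w, hroot, hw, -⟩ := (IsAlgClosed.splits _).exists_isRoot_norm_sub_pow_mul_le
      (h.trunc (m := N + 1 + 0) (by omega)) hN (by simp : ‖(0 : k)‖ ≤ 1)
    exact ⟨w, hw, hroot⟩
  · obtain ⟨y, hroot', hy, hle⟩ := (IsAlgClosed.splits _).exists_isRoot_norm_sub_pow_mul_le
      (h.trunc (m := N + 1 + j + 1) (by omega)) hN hx
    refine ⟨y, ⟨hy, hroot'⟩, ?_⟩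
    rw [eval_trunc_mk, Finset.sum_range_succ, ← eval_trunc_mk, hroot.eq_zero, zero_add] at hle
    rw [norm_sub_rev]
    exact hle.trans (norm_mul_pow_le_of_norm_le_one _ hx _)

theorem exists_norm_le_one_and_tsum_eq_zero_iff [IsAlgClosed k] [CompleteSpace k] (ha0 : a 0 ≠ 0)
    (ha : Tendsto (fun n => ‖a n‖) atTop (𝓝 0)) :
    (∃ z : k, ‖z‖ ≤ 1 ∧ ∑' n, a n * z ^ n = 0) ↔
      ‖a 0‖ ≤ ⨆ n, ‖a (n + 1)‖ := by
  constructor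
  · rintro ⟨z, hz, hf⟩
    rw [(summable_mul_pow ha hz).tsum_eq_zero_add, pow_zero, mul_one,
      add_eq_zero_iff_eq_neg] at hf
    rw [hf, norm_neg]
    exact IsUltrametricDist.norm_tsum_le_of_forall_le_of_nonneg
      (Real.iSup_nonneg fun _ => norm_nonneg _) fun n =>
        (norm_mul_pow_le_of_norm_le_one _ hz _).trans
          (le_ciSup (ha.comp (tendsto_add_atTop_nat 1)).bddAbove_range n)
  · intro h0
    obtain ⟨N, μ, hcentral⟩ := IsCentralIndex.exists_of_tendsto ha ha0
    have hN := hcentral.pos_of_norm_le_iSup ha h0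
    have hm : Tendsto (fun j : ℕ => N + 1 + j) atTop atTop :=
      tendsto_atTop_mono (fun j => Nat.le_add_left j (N + 1)) tendsto_id
    obtain ⟨z, hz⟩ := exists_seq_isRoot_trunc hcentral hN
    obtain ⟨w, hlim⟩ := cauchySeq_tendsto_of_complete <|
      cauchySeq_of_norm_sub_pow_mul_le hN.ne' hcentral.pos (ha.comp hm) fun j => (hz j).2
    have hw : ‖w‖ ≤ 1 := le_of_tendsto hlim.norm (Eventually.of_forall fun j => (hz j).1.1)
    exact ⟨w, hw, tsum_eq_zero_of_tendsto_of_eval_trunc_eq_zero ha (fun j => (hz j).1.1)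
      (fun j => (hz j).1.2) hm hw hlim⟩

end NormedField

theorem exists_norm_le_and_tsum_eq_zero_iff_rescale {k : Type*} [NormedField k] (a : ℕ → k)
    {c : k} (hc : c ≠ 0) :
    (∃ z : k, ‖z‖ ≤ ‖c‖ ∧ ∑' n, a n * z ^ n = 0) ↔
      ∃ t : k, ‖t‖ ≤ 1 ∧ ∑' n, a n * c ^ n * t ^ n = 0 := by
  have hterm (t : k) (n : ℕ) : a n * (c * t) ^ n = a n * c ^ n * t ^ n := by ring
  have hc' : 0 < ‖c‖ := norm_pos_iff.2 hc
  constructor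
  · rintro ⟨z, hz, hf⟩
    refine ⟨c⁻¹ * z, ?_, ?_⟩
    · rw [norm_mul, norm_inv, inv_mul_le_iff₀ hc', mul_one]; exact hz
    · simpa only [← hterm, mul_inv_cancel_left₀ hc] using hf
  · rintro ⟨t, ht, hf⟩
    refine ⟨c * t, ?_, by simpa only [← hterm] using hf⟩
    rw [norm_mul]; exact mul_le_of_le_one_right hc'.le ht

/-- A power series with `a₀ ≠ 0` and `‖aₙ‖ rⁿ → 0` has a zero in the closed disc of
radius `r` iff `‖a₀‖ ≤ sup_{n ≥ 1} ‖aₙ‖ rⁿ`. -/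
theorem zero_in_disc_iff
    (k : Type*) [NontriviallyNormedField k] [IsAlgClosed k] [CompleteSpace k]
    [IsUltrametricDist k]
    (a : ℕ → k) (c : k) (hc : c ≠ 0) (r : ℝ) (hr : r = ‖c‖)
    (ha0 : a 0 ≠ 0)
    (hdecay : Tendsto (fun n => ‖a n‖ * r ^ n) atTop (nhds 0)) :
    (∃ z : k, ‖z‖ ≤ r ∧ ∑' n : ℕ, a n * z ^ n = 0)
      ↔ ‖a 0‖ ≤ ⨆ n : ℕ, ‖a (n + 1)‖ * r ^ (n + 1) := by
  subst hr
  have hnorm (n : ℕ) : ‖a n * c ^ n‖ = ‖a n‖ * ‖c‖ ^ n := by rw [norm_mul, norm_pow]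
  rw [exists_norm_le_and_tsum_eq_zero_iff_rescale a hc,
    exists_norm_le_one_and_tsum_eq_zero_iff (by simpa using ha0)
      (by simpa only [hnorm] using hdecay)]
  simp only [hnorm, pow_zero, mul_one]
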